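/- For an antichain Γ in the poset Δ⁺ of positive roots of type A_n (n ≥ 2), the OY-number satisfies 𝒴(Γ) = n − 1 if and only if Γ is the set of simple roots with odd indices, Γ = {α_i : i odd, 1 ≤ i ≤ n}, or the set of simple roots with even indices, Γ = {α_i : i even, 1 ≤ i ≤ n}. -/

import Mathlib

open Finset

/-- The root order on pairs: `(i,j) ≼ (i',j')` iff `i' ≤ i` and `j ≤ j'`. -/
def rle (p q : ℕ × ℕ) : Prop := q.1 ≤ p.1 ∧ p.2 ≤ q.2

instance : DecidableRel rle := fun p q =>
  inferInstanceAs (Decidable (q.1 ≤ p.1 ∧ p.2 ≤ q.2))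

/-- The positive roots of type `A_n`, modelled as pairs `(i,j)` with `1 ≤ i ≤ j ≤ n`. -/
def roots (n : ℕ) : Finset (ℕ × ℕ) :=
  ((Finset.Icc 1 n) ×ˢ (Finset.Icc 1 n)).filter (fun p => p.1 ≤ p.2)

/-- `Γ` is an antichain in `Δ⁺(A_n)`: a set of pairwise incomparable positive roots. -/
def IsAC (n : ℕ) (Γ : Finset (ℕ × ℕ)) : Prop :=
  Γ ⊆ roots n ∧ ∀ p ∈ Γ, ∀ q ∈ Γ, rle p q → p = q

/-- The upper ideal `I(Γ) = {x ∈ Δ⁺ : ∃ γ ∈ Γ, γ ≼ x}` generated by `Γ`. -/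
def upIdeal (n : ℕ) (Γ : Finset (ℕ × ℕ)) : Finset (ℕ × ℕ) :=
  (roots n).filter (fun x => ∃ γ ∈ Γ, rle γ x)

/-- The set of maximal elements of `S` with respect to the root order. -/
def maxOf (S : Finset (ℕ × ℕ)) : Finset (ℕ × ℕ) :=
  S.filter (fun x => ∀ y ∈ S, rle x y → y = x)

/-- The set of minimal elements of `S` with respect to the root order. -/
def minOf (S : Finset (ℕ × ℕ)) : Finset (ℕ × ℕ) :=
  S.filter (fun x => ∀ y ∈ S, rle y x → y = x)

/-- The reverse operator `𝔛`, sending an antichain `Γ` to the set of maximal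
elements of `Δ⁺ \ I(Γ)`. -/
def Xrev (n : ℕ) (Γ : Finset (ℕ × ℕ)) : Finset (ℕ × ℕ) :=
  maxOf (roots n \ upIdeal n Γ)

/-- `r_Γ(γ) = #(I(Γ) \ {γ})_min − #I(Γ)_min + 1`. -/
def rGam (n : ℕ) (Γ : Finset (ℕ × ℕ)) (γ : ℕ × ℕ) : ℤ :=
  ((minOf (upIdeal n Γ \ {γ})).card : ℤ) - ((minOf (upIdeal n Γ)).card : ℤ) + 1

/-- The OY-number `𝒴(Γ) = Σ_{γ ∈ Γ} r_Γ(γ)`; in particular `𝒴(∅) = 0`. -/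
def OY (n : ℕ) (Γ : Finset (ℕ × ℕ)) : ℤ := ∑ γ ∈ Γ, rGam n Γ γ

/-!
In an antichain `Γ` the first coordinates `X` and the second coordinates `Y` increase together,
and deleting `γ` from `I(Γ)` exposes exactly those of the two covers `(γ₁ - 1, γ₂)`,
`(γ₁, γ₂ + 1)` that lie above no other element of `Γ`. Hence `𝒴(Γ) = u(X) + d(Y)`, where `u`
(resp. `d`) counts the positions `i < n` at which the 0/1-word of a subset of `[1, n]` steps up
(resp. down). As `u - d` telescopes to (last letter) − (first letter),
`2 (u(X) + d(Y)) = c(X) + c(Y) + ([n ∈ X] - [n ∈ Y]) + ([1 ∈ Y] - [1 ∈ X])`,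
where `c = u + d ≤ n - 1` counts all letter changes, and both brackets are `≤ 0` for an
antichain. So `𝒴(Γ) = n - 1` forces `X` and `Y` to be alternating words with the same first
letter, i.e. `X = Y` = the odd or the even numbers of `[1, n]`; finally `X = Y` makes `Γ`
diagonal, since `∑ γ₁ = ∑ γ₂` while `γ₁ ≤ γ₂`.
-/

theorem card_filter_apply_mem {α β : Type*} [DecidableEq β] {s : Finset α} {t : Finset β}
    {f : α → β} (hf : Set.InjOn f s) (ht : t ⊆ s.image f) : #(s.filter fun a => f a ∈ t) = #t :=
  card_nbij f (fun _ ha => (mem_filter.1 ha).2) (hf.mono (coe_subset.2 (filter_subset _ _)))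
    fun b hb => by
      obtain ⟨a, ha, rfl⟩ := mem_image.1 (ht hb)
      exact ⟨a, mem_filter.2 ⟨ha, hb⟩, rfl⟩

section Steps

variable {n : ℕ} {S X Y : Finset ℕ}

def stepUps (n : ℕ) (S : Finset ℕ) : Finset ℕ := (Ico 1 n).filter (fun i => i ∉ S ∧ i + 1 ∈ S)

def stepDowns (n : ℕ) (S : Finset ℕ) : Finset ℕ := (Ico 1 n).filter (fun i => i ∈ S ∧ i + 1 ∉ S)

def Alternating (n : ℕ) (S : Finset ℕ) : Prop := ∀ i ∈ Ico 1 n, i ∈ S ↔ i + 1 ∉ S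

theorem card_stepUps_sub_card_stepDowns (hn : 1 ≤ n) (S : Finset ℕ) :
    (#(stepUps n S) - #(stepDowns n S) : ℤ) =
      (if n ∈ S then 1 else 0) - (if 1 ∈ S then 1 else 0) := by
  rw [stepUps, stepDowns, natCast_card_filter, natCast_card_filter, ← sum_sub_distrib,
    ← sum_Ico_sub (fun i => if i ∈ S then (1 : ℤ) else 0) hn]
  refine sum_congr rfl fun i _ => ?_
  by_cases hi : i ∈ S <;> by_cases hi' : i + 1 ∈ S <;> simp [hi, hi']

theorem card_stepUps_add_card_stepDowns (S : Finset ℕ) :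
    #(stepUps n S) + #(stepDowns n S) = #((Ico 1 n).filter (fun i => i ∈ S ↔ i + 1 ∉ S)) := by
  rw [stepUps, stepDowns, ← card_union_of_disjoint, ← filter_or]
  · exact congrArg card (filter_congr fun i _ => by tauto)
  · exact disjoint_filter.2 fun i _ h h' => h.1 h'.1

theorem card_stepUps_add_card_stepDowns_le (S : Finset ℕ) :
    #(stepUps n S) + #(stepDowns n S) ≤ n - 1 := by
  rw [card_stepUps_add_card_stepDowns, ← Nat.card_Ico 1 n]
  exact card_filter_le _ _

theorem alternating_iff_card_stepUps_add_card_stepDowns (S : Finset ℕ) :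
    Alternating n S ↔ #(stepUps n S) + #(stepDowns n S) = n - 1 := by
  rw [card_stepUps_add_card_stepDowns, ← Nat.card_Ico 1 n, card_filter_eq_iff, Alternating]

theorem Alternating.eq_filter_odd_iff_one_mem (hS : S ⊆ Icc 1 n) (h : Alternating n S) :
    S = (Icc 1 n).filter (fun i => Odd i ↔ 1 ∈ S) := by
  have key : ∀ i, 1 ≤ i → i ≤ n → (i ∈ S ↔ (Odd i ↔ 1 ∈ S)) := by
    intro i hi
    induction i, hi using Nat.le_induction with
    | base => simp
    | succ i hi ih =>
      intro hin
      have := h i (mem_Ico.2 ⟨hi, hin⟩)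
      have := ih (by omega)
      rw [Nat.odd_add_one]
      tauto
  ext i
  rw [mem_filter, mem_Icc]
  exact ⟨fun hi => have hb := mem_Icc.1 (hS hi); ⟨hb, (key i hb.1 hb.2).1 hi⟩,
    fun ⟨hb, hi⟩ => (key i hb.1 hb.2).2 hi⟩

theorem alternating_iff_eq_filter_odd_or_even (hS : S ⊆ Icc 1 n) :
    Alternating n S ↔ S = (Icc 1 n).filter Odd ∨ S = (Icc 1 n).filter Even := by
  refine ⟨fun h => ?_, ?_⟩
  · rw [h.eq_filter_odd_iff_one_mem hS]
    by_cases h1 : 1 ∈ S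
    · exact Or.inl (filter_congr fun i _ => by simp [h1])
    · exact Or.inr (filter_congr fun i _ => by simp [h1, Nat.not_odd_iff_even])
  · rintro (rfl | rfl) i hi <;> have := mem_Ico.1 hi <;>
      simp [Nat.odd_add_one, Nat.even_add_one, this.1, this.2, this.2.le]

theorem card_stepUps_add_card_stepDowns_eq_iff (hn : 1 ≤ n) (hX : X ⊆ Icc 1 n)
    (hY : Y ⊆ Icc 1 n) (htop : n ∈ X → n ∈ Y) (hbot : 1 ∈ Y → 1 ∈ X) :
    (#(stepUps n X) + #(stepDowns n Y) : ℤ) = n - 1 ↔ X = Y ∧ Alternating n X := by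
  have tX := card_stepUps_sub_card_stepDowns hn X
  have tY := card_stepUps_sub_card_stepDowns hn Y
  have cX := card_stepUps_add_card_stepDowns_le (n := n) X
  have cY := card_stepUps_add_card_stepDowns_le (n := n) Y
  constructor
  · intro h
    have : #(stepUps n X) + #(stepDowns n X) = n - 1 ∧
        #(stepUps n Y) + #(stepDowns n Y) = n - 1 ∧ (1 ∈ X ↔ 1 ∈ Y) := by
      split_ifs at tX tY <;> simp_all <;> omega
    obtain ⟨hAX, hAY, h1⟩ := this
    rw [← alternating_iff_card_stepUps_add_card_stepDowns] at hAX hAY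
    refine ⟨?_, hAX⟩
    rw [hAX.eq_filter_odd_iff_one_mem hX, hAY.eq_filter_odd_iff_one_mem hY]
    simp only [h1]
  · rintro ⟨rfl, h⟩
    rw [alternating_iff_card_stepUps_add_card_stepDowns] at h
    omega

end Steps

theorem rle_refl (p : ℕ × ℕ) : rle p p := ⟨le_rfl, le_rfl⟩

theorem rle_trans {p q r : ℕ × ℕ} (h₁ : rle p q) (h₂ : rle q r) : rle p r :=
  ⟨h₂.1.trans h₁.1, h₁.2.trans h₂.2⟩

theorem rle_antisymm {p q : ℕ × ℕ} (h₁ : rle p q) (h₂ : rle q p) : p = q :=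
  Prod.ext (le_antisymm h₂.1 h₁.1) (le_antisymm h₁.2 h₂.2)

theorem mem_roots {n : ℕ} {p : ℕ × ℕ} : p ∈ roots n ↔ 1 ≤ p.1 ∧ p.1 ≤ p.2 ∧ p.2 ≤ n := by
  simp only [roots, mem_filter, mem_product, mem_Icc]
  omega

theorem mem_upIdeal {n : ℕ} {Γ : Finset (ℕ × ℕ)} {x : ℕ × ℕ} :
    x ∈ upIdeal n Γ ↔ x ∈ roots n ∧ ∃ δ ∈ Γ, rle δ x := mem_filter

def exposedCovers (n : ℕ) (Γ : Finset (ℕ × ℕ)) (γ : ℕ × ℕ) : Finset (ℕ × ℕ) :=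
  ({(γ.1 - 1, γ.2), (γ.1, γ.2 + 1)} : Finset (ℕ × ℕ)).filter
    (fun x => x ∈ roots n ∧ ∀ δ ∈ Γ.erase γ, ¬ rle δ x)

namespace IsAC

variable {n : ℕ} {Γ : Finset (ℕ × ℕ)} {γ δ : ℕ × ℕ}

theorem fst_lt_fst_iff_snd_lt_snd (hΓ : IsAC n Γ) (hγ : γ ∈ Γ) (hδ : δ ∈ Γ) :
    δ.1 < γ.1 ↔ δ.2 < γ.2 := by
  constructor
  · refine fun h => not_le.1 fun h' => ?_
    obtain rfl := hΓ.2 γ hγ δ hδ ⟨h.le, h'⟩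
    exact lt_irrefl _ h
  · refine fun h => not_le.1 fun h' => ?_
    obtain rfl := hΓ.2 δ hδ γ hγ ⟨h', h.le⟩
    exact lt_irrefl _ h

theorem injOn_fst (hΓ : IsAC n Γ) : Set.InjOn Prod.fst (Γ : Set (ℕ × ℕ)) := fun γ hγ δ hδ h => by
  have := hΓ.fst_lt_fst_iff_snd_lt_snd hγ hδ
  have := hΓ.fst_lt_fst_iff_snd_lt_snd hδ hγ
  exact Prod.ext h (by omega)

theorem injOn_snd (hΓ : IsAC n Γ) : Set.InjOn Prod.snd (Γ : Set (ℕ × ℕ)) := fun γ hγ δ hδ h => by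
  have := hΓ.fst_lt_fst_iff_snd_lt_snd hγ hδ
  have := hΓ.fst_lt_fst_iff_snd_lt_snd hδ hγ
  exact Prod.ext (by omega) h

theorem eq_of_rle_of_mem_upIdeal (hΓ : IsAC n Γ) {x y : ℕ × ℕ} (hx : x ∈ Γ)
    (hy : y ∈ upIdeal n Γ) (hyx : rle y x) : y = x := by
  obtain ⟨-, δ, hδ, hδy⟩ := mem_upIdeal.1 hy
  obtain rfl := hΓ.2 δ hδ x hx (rle_trans hδy hyx)
  exact rle_antisymm hyx hδy

theorem minOf_upIdeal (hΓ : IsAC n Γ) : minOf (upIdeal n Γ) = Γ := by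
  ext x
  simp only [minOf, mem_filter]
  constructor
  · rintro ⟨hx, hmin⟩
    obtain ⟨-, δ, hδ, hδx⟩ := mem_upIdeal.1 hx
    exact hmin δ (mem_upIdeal.2 ⟨hΓ.1 hδ, δ, hδ, rle_refl δ⟩) hδx ▸ hδ
  · intro hx
    exact ⟨mem_upIdeal.2 ⟨hΓ.1 hx, x, hx, rle_refl x⟩,
      fun y hy hyx => hΓ.eq_of_rle_of_mem_upIdeal hx hy hyx⟩

theorem minOf_upIdeal_sdiff (hΓ : IsAC n Γ) (hγ : γ ∈ Γ) :
    minOf (upIdeal n Γ \ {γ}) = Γ.erase γ ∪ exposedCovers n Γ γ := by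
  have hγr := mem_roots.1 (hΓ.1 hγ)
  ext x
  simp only [minOf, exposedCovers, mem_filter, mem_sdiff, mem_singleton, mem_union]
  constructor
  · rintro ⟨⟨hxI, hxγ⟩, hmin⟩
    obtain ⟨hxr, δ, hδ, hδx⟩ := mem_upIdeal.1 hxI
    by_cases hfree : ∀ δ ∈ Γ.erase γ, ¬ rle δ x
    · right
      have hγx : rle γ x := by
        by_contra h
        exact hfree δ (mem_erase.2 ⟨fun e => h (e ▸ hδx), hδ⟩) hδx
      -- the cover of `γ` below `x` lies in `I(Γ) \ {γ}`, so by minimality it is `x`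
      have hcover : ∀ y ∈ roots n, rle γ y → y ≠ γ → rle y x → y = x := fun y hy hγy hyγ hyx =>
        hmin y ⟨mem_upIdeal.2 ⟨hy, γ, hγ, hγy⟩, hyγ⟩ hyx
      have hxr' := mem_roots.1 hxr
      have hxγ' := mt Prod.ext_iff.2 hxγ
      refine ⟨?_, hxr, hfree⟩
      obtain ⟨hγx₁, hγx₂⟩ := hγx
      rcases lt_or_eq_of_le hγx₁ with h | h
      · have := hcover (γ.1 - 1, γ.2) (mem_roots.2 ⟨by omega, by omega, hγr.2.2⟩)
          ⟨Nat.sub_le _ _, le_rfl⟩ (by simp [Prod.ext_iff]; omega) ⟨Nat.le_sub_one_of_lt h, hγx₂⟩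
        simp [← this]
      · have := hcover (γ.1, γ.2 + 1) (mem_roots.2 ⟨hγr.1, by omega, by omega⟩)
          ⟨le_rfl, Nat.le_succ _⟩ (by simp [Prod.ext_iff]) ⟨h.le, by omega⟩
        simp [← this]
    · push Not at hfree
      obtain ⟨δ', hδ', hδ'x⟩ := hfree
      obtain rfl := hmin δ' ⟨mem_upIdeal.2 ⟨hΓ.1 (mem_of_mem_erase hδ'), δ', mem_of_mem_erase hδ',
        rle_refl δ'⟩, ne_of_mem_erase hδ'⟩ hδ'x
      exact Or.inl hδ'
  · rintro (hx | ⟨hxc, hxr, hfree⟩)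
    · obtain ⟨hxγ, hx⟩ := mem_erase.1 hx
      exact ⟨⟨mem_upIdeal.2 ⟨hΓ.1 hx, x, hx, rle_refl x⟩, hxγ⟩,
        fun y hy hyx => hΓ.eq_of_rle_of_mem_upIdeal hx hy.1 hyx⟩
    · have hxr' := mem_roots.1 hxr
      have hxc' : (x.1 = γ.1 - 1 ∧ x.2 = γ.2) ∨ (x.1 = γ.1 ∧ x.2 = γ.2 + 1) := by
        simpa [Prod.ext_iff] using hxc
      have hγx : rle γ x := ⟨by omega, by omega⟩
      refine ⟨⟨mem_upIdeal.2 ⟨hxr, γ, hγ, hγx⟩, fun e => ?_⟩, fun y ⟨hyI, hyγ⟩ hyx => ?_⟩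
      · rw [Prod.ext_iff] at e
        omega
      · obtain ⟨-, δ, hδ, hδy⟩ := mem_upIdeal.1 hyI
        obtain rfl : δ = γ := by
          by_contra h
          exact hfree δ (mem_erase.2 ⟨h, hδ⟩) (rle_trans hδy hyx)
        have hyγ' := mt Prod.ext_iff.2 hyγ
        obtain ⟨h₁, h₂⟩ := hδy
        obtain ⟨h₃, h₄⟩ := hyx
        exact Prod.ext (by omega) (by omega)

theorem rGam_eq_card_exposedCovers (hΓ : IsAC n Γ) (hγ : γ ∈ Γ) :
    rGam n Γ γ = #(exposedCovers n Γ γ) := by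
  have hdisj : Disjoint (Γ.erase γ) (exposedCovers n Γ γ) :=
    disjoint_left.2 fun x hx hx' => (mem_filter.1 hx').2.2 x hx (rle_refl x)
  rw [rGam, hΓ.minOf_upIdeal, hΓ.minOf_upIdeal_sdiff hγ, card_union_of_disjoint hdisj,
    card_erase_of_mem hγ]
  have := card_pos.2 ⟨γ, hγ⟩
  omega

theorem leftCover_exposed_iff (hΓ : IsAC n Γ) (hγ : γ ∈ Γ) :
    ((γ.1 - 1, γ.2) ∈ roots n ∧ ∀ δ ∈ Γ.erase γ, ¬ rle δ (γ.1 - 1, γ.2)) ↔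
      γ.1 - 1 ∈ stepUps n (Γ.image Prod.fst) := by
  have hγr := mem_roots.1 (hΓ.1 hγ)
  have hrle : ∀ δ ∈ Γ.erase γ, rle δ (γ.1 - 1, γ.2) ↔ δ.1 = γ.1 - 1 := fun δ hδ => by
    obtain ⟨hne, hδ⟩ := mem_erase.1 hδ
    have := hΓ.fst_lt_fst_iff_snd_lt_snd hγ hδ
    have := mt (hΓ.injOn_fst hδ hγ) hne
    have := mt (hΓ.injOn_snd hδ hγ) hne
    show γ.1 - 1 ≤ δ.1 ∧ δ.2 ≤ γ.2 ↔ _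
    omega
  simp only [stepUps, mem_filter, mem_Ico, mem_roots, mem_image]
  constructor
  · rintro ⟨⟨h₁, -, -⟩, hfree⟩
    refine ⟨⟨h₁, by omega⟩, fun ⟨δ, hδ, hδ₁⟩ => ?_, ⟨γ, hγ, by omega⟩⟩
    have hne : δ ≠ γ := fun e => by subst e; omega
    exact hfree δ (mem_erase.2 ⟨hne, hδ⟩) ((hrle δ (mem_erase.2 ⟨hne, hδ⟩)).2 hδ₁)
  · rintro ⟨⟨h₁, -⟩, hX, -⟩
    exact ⟨⟨h₁, by omega, hγr.2.2⟩,
      fun δ hδ hle => hX ⟨δ, mem_of_mem_erase hδ, (hrle δ hδ).1 hle⟩⟩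

theorem rightCover_exposed_iff (hΓ : IsAC n Γ) (hγ : γ ∈ Γ) :
    ((γ.1, γ.2 + 1) ∈ roots n ∧ ∀ δ ∈ Γ.erase γ, ¬ rle δ (γ.1, γ.2 + 1)) ↔
      γ.2 ∈ stepDowns n (Γ.image Prod.snd) := by
  have hγr := mem_roots.1 (hΓ.1 hγ)
  have hrle : ∀ δ ∈ Γ.erase γ, rle δ (γ.1, γ.2 + 1) ↔ δ.2 = γ.2 + 1 := fun δ hδ => by
    obtain ⟨hne, hδ⟩ := mem_erase.1 hδ
    have := hΓ.fst_lt_fst_iff_snd_lt_snd hγ hδ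
    have := hΓ.fst_lt_fst_iff_snd_lt_snd hδ hγ
    have := mt (hΓ.injOn_fst hδ hγ) hne
    have := mt (hΓ.injOn_snd hδ hγ) hne
    show γ.1 ≤ δ.1 ∧ δ.2 ≤ γ.2 + 1 ↔ _
    omega
  simp only [stepDowns, mem_filter, mem_Ico, mem_roots, mem_image]
  constructor
  · rintro ⟨⟨-, -, h₂⟩, hfree⟩
    refine ⟨⟨hγr.1.trans hγr.2.1, by omega⟩, ⟨γ, hγ, rfl⟩, fun ⟨δ, hδ, hδ₂⟩ => ?_⟩
    have hne : δ ≠ γ := fun e => by subst e; omega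
    exact hfree δ (mem_erase.2 ⟨hne, hδ⟩) ((hrle δ (mem_erase.2 ⟨hne, hδ⟩)).2 hδ₂)
  · rintro ⟨⟨-, h₂⟩, -, hY⟩
    exact ⟨⟨hγr.1, by omega, h₂⟩,
      fun δ hδ hle => hY ⟨δ, mem_of_mem_erase hδ, (hrle δ hδ).1 hle⟩⟩

theorem card_exposedCovers (hΓ : IsAC n Γ) (hγ : γ ∈ Γ) :
    (#(exposedCovers n Γ γ) : ℤ) =
      (if γ.1 - 1 ∈ stepUps n (Γ.image Prod.fst) then 1 else 0) +
        (if γ.2 ∈ stepDowns n (Γ.image Prod.snd) then 1 else 0) := by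
  rw [exposedCovers, natCast_card_filter, sum_pair (by simp [Prod.ext_iff]),
    if_congr (hΓ.leftCover_exposed_iff hγ) rfl rfl, if_congr (hΓ.rightCover_exposed_iff hγ) rfl rfl]

theorem image_fst_subset (hΓ : IsAC n Γ) : Γ.image Prod.fst ⊆ Icc 1 n := fun i hi => by
  obtain ⟨γ, hγ, rfl⟩ := mem_image.1 hi
  have := mem_roots.1 (hΓ.1 hγ)
  exact mem_Icc.2 ⟨this.1, by omega⟩

theorem image_snd_subset (hΓ : IsAC n Γ) : Γ.image Prod.snd ⊆ Icc 1 n := fun i hi => by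
  obtain ⟨γ, hγ, rfl⟩ := mem_image.1 hi
  have := mem_roots.1 (hΓ.1 hγ)
  exact mem_Icc.2 ⟨by omega, this.2.2⟩

theorem last_mem_image_snd (hΓ : IsAC n Γ) (h : n ∈ Γ.image Prod.fst) : n ∈ Γ.image Prod.snd := by
  obtain ⟨γ, hγ, hγ₁⟩ := mem_image.1 h
  have := mem_roots.1 (hΓ.1 hγ)
  exact mem_image.2 ⟨γ, hγ, by omega⟩

theorem one_mem_image_fst (hΓ : IsAC n Γ) (h : 1 ∈ Γ.image Prod.snd) : 1 ∈ Γ.image Prod.fst := by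
  obtain ⟨γ, hγ, hγ₂⟩ := mem_image.1 h
  have := mem_roots.1 (hΓ.1 hγ)
  exact mem_image.2 ⟨γ, hγ, by omega⟩

theorem OY_eq_card_stepUps_add_card_stepDowns (hΓ : IsAC n Γ) :
    OY n Γ = #(stepUps n (Γ.image Prod.fst)) + #(stepDowns n (Γ.image Prod.snd)) := by
  have hU : #(Γ.filter fun γ => γ.1 - 1 ∈ stepUps n (Γ.image Prod.fst)) =
      #(stepUps n (Γ.image Prod.fst)) := by
    refine card_filter_apply_mem (fun γ hγ δ hδ h => hΓ.injOn_fst hγ hδ ?_) fun i hi => ?_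
    · have := (mem_roots.1 (hΓ.1 hγ)).1
      have := (mem_roots.1 (hΓ.1 hδ)).1
      omega
    · obtain ⟨γ, hγ, hγ₁⟩ := mem_image.1 (mem_filter.1 hi).2.2
      exact mem_image.2 ⟨γ, hγ, by omega⟩
  have hD : #(Γ.filter fun γ => γ.2 ∈ stepDowns n (Γ.image Prod.snd)) =
      #(stepDowns n (Γ.image Prod.snd)) :=
    card_filter_apply_mem hΓ.injOn_snd fun i hi => (mem_filter.1 hi).2.1
  rw [OY, sum_congr rfl fun γ hγ =>
      (hΓ.rGam_eq_card_exposedCovers hγ).trans (hΓ.card_exposedCovers hγ),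
    sum_add_distrib, sum_boole, sum_boole, hU, hD]

theorem fst_eq_snd_of_image_fst_eq_image_snd (hΓ : IsAC n Γ)
    (h : Γ.image Prod.fst = Γ.image Prod.snd) : ∀ γ ∈ Γ, γ.1 = γ.2 := by
  have hsum : ∑ γ ∈ Γ, γ.1 = ∑ γ ∈ Γ, γ.2 := calc
    ∑ γ ∈ Γ, γ.1 = ∑ i ∈ Γ.image Prod.fst, i := (sum_image (f := id) hΓ.injOn_fst).symm
    _ = ∑ i ∈ Γ.image Prod.snd, i := by rw [h]
    _ = ∑ γ ∈ Γ, γ.2 := sum_image (f := id) hΓ.injOn_snd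
  exact (sum_eq_sum_iff_of_le fun γ hγ => (mem_roots.1 (hΓ.1 hγ)).2.1).1 hsum

theorem eq_filter_diag_iff (hΓ : IsAC n Γ) (P : ℕ → Prop) [DecidablePred P] :
    Γ = (roots n).filter (fun p => p.1 = p.2 ∧ P p.1) ↔
      Γ.image Prod.fst = (Icc 1 n).filter P ∧ Γ.image Prod.snd = (Icc 1 n).filter P := by
  constructor
  · rintro rfl
    constructor <;> ext i <;> simp [mem_roots]
  · rintro ⟨hX, hY⟩
    have hdiag := hΓ.fst_eq_snd_of_image_fst_eq_image_snd (hX.trans hY.symm)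
    ext p
    rw [mem_filter]
    constructor
    · intro hp
      have := mem_image_of_mem Prod.fst hp
      rw [hX, mem_filter] at this
      exact ⟨hΓ.1 hp, hdiag p hp, this.2⟩
    · rintro ⟨hpr, hpd, hP⟩
      have := mem_roots.1 hpr
      have : p.1 ∈ Γ.image Prod.fst := by
        rw [hX]
        exact mem_filter.2 ⟨mem_Icc.2 ⟨by omega, by omega⟩, hP⟩
      obtain ⟨γ, hγ, hγp⟩ := mem_image.1 this
      obtain rfl : γ = p := Prod.ext hγp (by rw [← hdiag γ hγ, hγp, hpd])
      exact hγ

end IsAC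

/-- For an antichain `Γ` in `Δ⁺(A_n)` with `n ≥ 2`, `𝒴(Γ) = n − 1` iff `Γ` is
the set of simple roots `α_i = (i,i)` with odd `i`, or the set of simple roots
with even `i`. -/
theorem stmt8 (n : ℕ) (hn : 2 ≤ n) (Γ : Finset (ℕ × ℕ)) (hΓ : IsAC n Γ) :
    OY n Γ = (n : ℤ) - 1 ↔
      (Γ = (roots n).filter (fun p => p.1 = p.2 ∧ Odd p.1) ∨
       Γ = (roots n).filter (fun p => p.1 = p.2 ∧ Even p.1)) := by
  rw [hΓ.OY_eq_card_stepUps_add_card_stepDowns,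
    card_stepUps_add_card_stepDowns_eq_iff (by omega) hΓ.image_fst_subset hΓ.image_snd_subset
      hΓ.last_mem_image_snd hΓ.one_mem_image_fst,
    alternating_iff_eq_filter_odd_or_even hΓ.image_fst_subset, hΓ.eq_filter_diag_iff,
    hΓ.eq_filter_diag_iff]
  constructor
  · rintro ⟨hXY, hX | hX⟩
    · exact Or.inl ⟨hX, hXY ▸ hX⟩
    · exact Or.inr ⟨hX, hXY ▸ hX⟩
  · rintro (⟨hX, hY⟩ | ⟨hX, hY⟩)
    · exact ⟨hX.trans hY.symm, Or.inl hX⟩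
    · exact ⟨hX.trans hY.symm, Or.inr hX⟩
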